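/- arXiv:2604.18511 — 3 statements merged into one kernel-verified Lean document; each statement's English description precedes it below -/
import Mathlib

section
/- Let X be a compact metric space, V_1 a d_1-dimensional real vector space, f_1 : X → V_1 continuous, and f_2 : X → ℝ^{d_2} componentwise lower semicontinuous with finitely many values. Then for every Borel probability measure ξ* on X there exists a probability measure η* on X supported on at most d_1 + d_2 + 1 points such that ∫_X f_1 dη* = ∫_X f_1 dξ* and ∫_X f_2 dη* ≤ ∫_X f_2 dξ* (componentwise). -/
open MeasureTheory
open scoped NNReal

/-- Carathéodory: a point of the convex hull is a combination of `finrank + 1` points. -/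
lemma caratheodory_point {E : Type*} [NormedAddCommGroup E] [NormedSpace ℝ E]
    [FiniteDimensional ℝ E] {s : Set E} {x : E} (hx : x ∈ convexHull ℝ s) :
    ∃ (w : Fin (Module.finrank ℝ E + 1) → ℝ) (z : Fin (Module.finrank ℝ E + 1) → E),
      (∀ i, 0 ≤ w i) ∧ ∑ i, w i = 1 ∧ (∀ i, z i ∈ s) ∧ ∑ i, w i • z i = x := by
  classical
  set n := Module.finrank ℝ E + 1 with hn
  rw [convexHull_eq_union] at hx
  simp only [Set.mem_iUnion] at hx
  obtain ⟨t, hts, hai, hxt⟩ := hx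
  have htne : t.Nonempty := by
    rcases t.eq_empty_or_nonempty with rfl | h
    · simp at hxt
    · exact h
  obtain ⟨e0, he0⟩ := htne
  have hmn : t.card ≤ n := by
    have h1 := hai.card_le_finrank_succ
    rw [Fintype.card_coe] at h1
    exact h1.trans (Nat.add_le_add_right (Submodule.finrank_le _) 1)
  rw [Finset.convexHull_eq] at hxt
  obtain ⟨w0, hw00, hw01, hwc⟩ := hxt
  have hwc' : ∑ a ∈ t, w0 a • a = x := by
    rw [← hwc, Finset.centerMass_eq_of_sum_1 _ _ hw01]; rfl
  set m := t.card with hm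
  set e : Fin m → E := fun j => (t.equivFin.symm j : E) with he
  have hemem : ∀ j, e j ∈ t := fun j => (t.equivFin.symm j).2
  set z : Fin n → E := fun j => if h : (j : ℕ) < m then e ⟨j, h⟩ else e0 with hz
  set w : Fin n → ℝ := fun j => if h : (j : ℕ) < m then w0 (e ⟨j, h⟩) else 0 with hw
  set F : Fin n → ℝ × E := fun j => (w j, w j • z j) with hF
  set S : Finset (Fin n) := Finset.univ.map (Fin.castLEEmb hmn) with hS
  have hmemS : ∀ j : Fin n, j ∈ S ↔ (j : ℕ) < m := by
    intro j
    simp only [hS, Finset.mem_map, Finset.mem_univ, true_and, Fin.castLEEmb,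
      Function.Embedding.coeFn_mk]
    constructor
    · rintro ⟨i, rfl⟩; exact i.2
    · intro h; exact ⟨⟨(j : ℕ), h⟩, by ext; rfl⟩
  have h1 : ∑ j, F j = ∑ j ∈ S, F j := by
    refine (Finset.sum_subset (Finset.subset_univ S) fun j _ hj => ?_).symm
    have : ¬ (j : ℕ) < m := fun h => hj ((hmemS j).2 h)
    simp [hF, hw, this]
  have h2 : ∑ j ∈ S, F j = ∑ a ∈ t, (w0 a, w0 a • a) := by
    rw [hS, Finset.sum_map]
    have : ∀ i : Fin m, F (Fin.castLEEmb hmn i) = (w0 (e i), w0 (e i) • e i) := by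
      intro i
      have hi : ((Fin.castLEEmb hmn i : Fin n) : ℕ) < m := i.2
      simp only [hF, hw, hz, dif_pos hi]
      congr 1 <;> · congr 1 <;> congr 1 <;> exact Fin.ext rfl
    rw [Finset.sum_congr rfl fun i _ => this i]
    rw [← Finset.sum_coe_sort t (fun a => (w0 a, w0 a • a))]
    exact Equiv.sum_comp t.equivFin.symm (fun a : {x // x ∈ t} => (w0 ↑a, w0 ↑a • (a : E)))
  have hkey : ∑ j, F j = (1, x) := by
    rw [h1, h2, Prod.ext_iff, Prod.fst_sum, Prod.snd_sum]
    exact ⟨hw01, hwc'⟩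
  refine ⟨w, z, ?_, ?_, ?_, ?_⟩
  · intro j
    by_cases h : (j : ℕ) < m
    · simp only [hw, dif_pos h]; exact hw00 _ (hemem _)
    · simp [hw, h]
  · have := congrArg Prod.fst hkey
    rwa [Prod.fst_sum] at this
  · intro j
    by_cases h : (j : ℕ) < m
    · simp only [hz, dif_pos h]; exact hts (hemem _)
    · simp only [hz, dif_neg h]; exact hts he0
  · have := congrArg Prod.snd hkey
    rwa [Prod.snd_sum] at this

/-- In a finite-dimensional space, the convex hull of a compact set is compact. -/
lemma isCompact_convexHull_aux {E : Type*} [NormedAddCommGroup E] [NormedSpace ℝ E]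
    [FiniteDimensional ℝ E] {s : Set E} (hs : IsCompact s) :
    IsCompact (convexHull ℝ s) := by
  classical
  rcases s.eq_empty_or_nonempty with rfl | hne
  · simp [convexHull_empty]
  set n := Module.finrank ℝ E + 1 with hn
  have himg : convexHull ℝ s =
      (fun p : (Fin n → ℝ) × (Fin n → E) => ∑ i, p.1 i • p.2 i) ''
        (stdSimplex ℝ (Fin n) ×ˢ Set.univ.pi fun _ => s) := by
    apply Set.Subset.antisymm
    · intro x hx
      obtain ⟨w, z, hw0, hw1, hzs, hsum⟩ := caratheodory_point hx
      exact ⟨(w, z), ⟨⟨hw0, hw1⟩, fun i _ => hzs i⟩, hsum⟩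
    · rintro x ⟨⟨w, z⟩, ⟨⟨hw0, hw1⟩, hz⟩, rfl⟩
      have := Finset.centerMass_mem_convexHull (Finset.univ : Finset (Fin n))
        (fun i _ => hw0 i) (by rw [hw1]; norm_num) (fun i _ => hz i (Set.mem_univ i))
      rwa [Finset.centerMass_eq_of_sum_1 _ _ hw1] at this
  rw [himg]
  refine IsCompact.image ((isCompact_stdSimplex _ _).prod (isCompact_univ_pi fun _ => hs)) ?_
  exact continuous_finset_sum _ fun i _ =>
    (((continuous_apply i).comp continuous_fst).smul ((continuous_apply i).comp continuous_snd))

/-- Integral against a finite weighted sum of Dirac measures. -/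
lemma integral_wsum_dirac {X : Type*} [MeasurableSpace X] [MeasurableSingletonClass X]
    {E : Type*} [NormedAddCommGroup E] [NormedSpace ℝ E] [CompleteSpace E]
    (s : Finset X) (w : X → ℝ≥0) (f : X → E) :
    ∫ x, f x ∂(∑ x ∈ s, (w x : ENNReal) • Measure.dirac x) = ∑ x ∈ s, (w x : ℝ) • f x := by
  have hint : ∀ x ∈ s, Integrable f ((w x : ENNReal) • Measure.dirac x) := by
    intro x _
    refine Integrable.smul_measure ?_ ENNReal.coe_ne_top
    have h : (fun _ : X => f x) =ᵐ[Measure.dirac x] f := by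
      rw [ae_dirac_eq]
      exact Filter.eventually_pure.2 rfl
    exact (integrable_const (f x)).congr h
  rw [integral_finset_sum_measure hint]
  refine Finset.sum_congr rfl fun x _ => ?_
  rw [integral_smul_measure, integral_dirac]
  simp
/-- Given `f₁ : X → V₁` continuous (`V₁` of dimension `d₁`) and
`f₂ : X → ℝ^{d₂}` componentwise lower semicontinuous with finitely many values on a compact
metric space `X`, every Borel probability measure `ξ*` admits a probability measure `η*`
supported on at most `d₁ + d₂ + 1` points with `∫ f₁ dη* = ∫ f₁ dξ*` and
`∫ f₂ dη* ≤ ∫ f₂ dξ*` componentwise. -/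
theorem exists_finitely_supported_measure_matching_moments
    {X : Type*} [MetricSpace X] [CompactSpace X] [MeasurableSpace X] [BorelSpace X]
    {V1 : Type*} [NormedAddCommGroup V1] [NormedSpace ℝ V1] [FiniteDimensional ℝ V1]
    {d1 d2 : ℕ} (hd1 : Module.finrank ℝ V1 = d1)
    (f1 : X → V1) (hf1 : Continuous f1)
    (f2 : X → Fin d2 → ℝ) (hf2 : ∀ i, LowerSemicontinuous fun x => f2 x i)
    (hfin : (Set.range f2).Finite)
    (ξ : Measure X) [IsProbabilityMeasure ξ] :
    ∃ (s : Finset X) (w : X → ℝ≥0) (η : Measure X),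
      IsProbabilityMeasure η ∧
      s.card ≤ d1 + d2 + 1 ∧
      η = ∑ x ∈ s, (w x : ENNReal) • Measure.dirac x ∧
      (∫ x, f1 x ∂η = ∫ x, f1 x ∂ξ) ∧
      ∀ i, (∫ x, f2 x i ∂η) ≤ ∫ x, f2 x i ∂ξ := by
  classical
  rcases isEmpty_or_nonempty X with hX | hX
  · exact absurd (measure_univ (μ := ξ)) (by simp [Set.univ_eq_empty_iff.2 hX])
  obtain ⟨x0⟩ := hX
  set W := V1 × (Fin d2 → ℝ) with hW
  set g : X → W := fun x => (f1 x, f2 x) with hg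
  have hf2m : ∀ i, Measurable fun x => f2 x i := fun i => (hf2 i).measurable
  have hf2meas : Measurable f2 := measurable_pi_lambda _ hf2m
  -- integrability
  have hif1 : Integrable f1 ξ := by
    obtain ⟨C, hC⟩ := isCompact_univ.exists_bound_of_continuousOn hf1.continuousOn
    exact (integrable_const C).mono' hf1.aestronglyMeasurable
      (Filter.Eventually.of_forall fun x => hC x (Set.mem_univ x))
  have hif2 : ∀ i, Integrable (fun x => f2 x i) ξ := by
    intro i
    obtain ⟨C, hC⟩ := ((hfin.image fun v => |v i|)).bddAbove
    refine (integrable_const C).mono' (hf2m i).aestronglyMeasurable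
      (Filter.Eventually.of_forall fun x => ?_)
    simpa using hC ⟨f2 x, Set.mem_range_self x, rfl⟩
  -- partition by values of f2
  set R : Finset (Fin d2 → ℝ) := hfin.toFinset with hR
  set A : (Fin d2 → ℝ) → Set X := fun v => f2 ⁻¹' {v} with hA
  have hAm : ∀ v, MeasurableSet (A v) := fun v => hf2meas (measurableSet_singleton v)
  have hpart : ξ = ∑ v ∈ R, ξ.restrict (A v) := by
    ext s hs
    rw [Measure.finset_sum_apply]
    have hcover : s = ⋃ v ∈ R, s ∩ A v := by
      ext x
      simp only [Set.mem_iUnion, Set.mem_inter_iff, hA, Set.mem_preimage,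
        Set.mem_singleton_iff, exists_prop]
      refine ⟨fun hx => ⟨f2 x, ?_, hx, rfl⟩, fun ⟨v, _, hx, _⟩ => hx⟩
      rw [hR, Set.Finite.mem_toFinset]
      exact Set.mem_range_self x
    have hdisj : (↑R : Set (Fin d2 → ℝ)).Pairwise
        (Function.onFun Disjoint fun v => s ∩ A v) := by
      intro v _ v' _ hvv'
      refine Set.disjoint_left.2 fun x hx hx' => hvv' ?_
      rw [← hx.2, ← hx'.2]
    calc ξ s = ξ (⋃ v ∈ R, s ∩ A v) := by rw [← hcover]
      _ = ∑ v ∈ R, ξ (s ∩ A v) :=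
          measure_biUnion_finset hdisj fun v _ => hs.inter (hAm v)
      _ = ∑ v ∈ R, ξ.restrict (A v) s := by
          refine Finset.sum_congr rfl fun v _ => ?_
          rw [Measure.restrict_apply hs]
  have hweight : ∑ v ∈ R, (ξ (A v)).toReal = 1 := by
    have h1 : (1 : ENNReal) = ∑ v ∈ R, ξ (A v) := by
      have := congrArg (fun μ : Measure X => μ Set.univ) hpart
      simpa [Measure.finset_sum_apply, Measure.restrict_apply MeasurableSet.univ] using this
    have h2 := congrArg ENNReal.toReal h1
    rw [ENNReal.toReal_one, ENNReal.toReal_sum (fun v _ => measure_ne_top ξ _)] at h2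
    exact h2.symm
  have hsplit1 : ∫ x, f1 x ∂ξ = ∑ v ∈ R, ∫ x in A v, f1 x ∂ξ := by
    conv_lhs => rw [hpart]
    exact integral_finset_sum_measure fun v _ => hif1.restrict
  have hsplit2 : ∀ i, ∫ x, f2 x i ∂ξ = ∑ v ∈ R, (ξ (A v)).toReal * v i := by
    intro i
    have h1 : ∫ x, f2 x i ∂ξ = ∑ v ∈ R, ∫ x in A v, f2 x i ∂ξ := by
      conv_lhs => rw [hpart]
      exact integral_finset_sum_measure fun v _ => (hif2 i).restrict
    rw [h1]
    refine Finset.sum_congr rfl fun v _ => ?_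
    have : ∀ x ∈ A v, f2 x i = v i := by
      intro x hx
      rw [show f2 x = v from hx]
    rw [setIntegral_congr_fun (hAm v) this, setIntegral_const, smul_eq_mul]; rfl
  -- lower semicontinuity on closure
  have hclos : ∀ v, ∀ y ∈ closure (A v), ∀ i, f2 y i ≤ v i := by
    intro v y hy i
    by_contra hlt
    push_neg at hlt
    have hev := hf2 i y (v i) hlt
    obtain ⟨x, hxA, hxgt⟩ := ((mem_closure_iff_frequently.1 hy).and_eventually hev).exists
    exact lt_irrefl (v i) (by simpa [show f2 x = v from hxA] using hxgt)
  -- per-value representation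
  have hq : ∀ v : Fin d2 → ℝ, ∃ q : W, q ∈ convexHull ℝ (Set.range g) ∧
      (ξ (A v)).toReal • q.1 = ∫ x in A v, f1 x ∂ξ ∧
      ∀ i, (ξ (A v)).toReal * q.2 i ≤ (ξ (A v)).toReal * v i := by
    intro v
    by_cases hz : ξ (A v) = 0
    · refine ⟨g x0, subset_convexHull ℝ _ (Set.mem_range_self x0), ?_, ?_⟩
      · rw [hz]
        simp [Measure.restrict_eq_zero.2 hz]
      · intro i; rw [hz]; simp
    · set ν : Measure X := (ξ (A v))⁻¹ • ξ.restrict (A v) with hν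
      have hνprob : IsProbabilityMeasure ν := by
        constructor
        rw [hν, Measure.smul_apply, Measure.restrict_apply MeasurableSet.univ,
          Set.univ_inter, smul_eq_mul, ENNReal.inv_mul_cancel hz (measure_ne_top _ _)]
      have hC : IsCompact (closure (A v)) := isClosed_closure.isCompact
      have hhull : IsCompact (convexHull ℝ (f1 '' closure (A v))) :=
        isCompact_convexHull_aux (hC.image hf1)
      have haem : ∀ᵐ x ∂ν, f1 x ∈ convexHull ℝ (f1 '' closure (A v)) := by
        rw [hν]
        refine Measure.ae_smul_measure ?_ _
        filter_upwards [ae_restrict_mem (hAm v)] with x hx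
        exact subset_convexHull ℝ _ ⟨x, subset_closure hx, rfl⟩
      have hint : Integrable f1 ν :=
        hif1.restrict.smul_measure (ENNReal.inv_ne_top.2 hz)
      have hm : ∫ x, f1 x ∂ν ∈ convexHull ℝ (f1 '' closure (A v)) :=
        (convex_convexHull ℝ _).integral_mem hhull.isClosed haem hint
      obtain ⟨w, z, hw0, hw1, hzmem, hzsum⟩ := caratheodory_point hm
      choose y hyC hyf using hzmem
      have htoReal0 : (ξ (A v)).toReal ≠ 0 :=
        ENNReal.toReal_ne_zero.2 ⟨hz, measure_ne_top _ _⟩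
      refine ⟨∑ j, w j • g (y j), ?_, ?_, ?_⟩
      · exact Convex.sum_mem (convex_convexHull ℝ _) (fun j _ => hw0 j) hw1
          (fun j _ => subset_convexHull ℝ _ (Set.mem_range_self _))
      · have hfst : (∑ j, w j • g (y j)).1 = ∑ j, w j • f1 (y j) := by
          rw [Prod.fst_sum]; rfl
        rw [hfst]
        have : ∑ j, w j • f1 (y j) = ∫ x, f1 x ∂ν := by
          rw [← hzsum]
          exact Finset.sum_congr rfl fun j _ => by rw [hyf j]
        rw [this, hν, integral_smul_measure, smul_smul, ENNReal.toReal_inv,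
          mul_inv_cancel₀ htoReal0, one_smul]
      · intro i
        have hsnd : (∑ j, w j • g (y j)).2 i = ∑ j, w j * f2 (y j) i := by
          rw [Prod.snd_sum, Finset.sum_apply]; rfl
        rw [hsnd]
        refine mul_le_mul_of_nonneg_left ?_ ENNReal.toReal_nonneg
        calc ∑ j, w j * f2 (y j) i ≤ ∑ j, w j * v i :=
              Finset.sum_le_sum fun j _ =>
                mul_le_mul_of_nonneg_left (hclos v (y j) (hyC j) i) (hw0 j)
          _ = v i := by rw [← Finset.sum_mul, hw1, one_mul]
  choose q hqhull hq1 hq2 using hq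
  set Q : W := ∑ v ∈ R, (ξ (A v)).toReal • q v with hQ
  have hQhull : Q ∈ convexHull ℝ (Set.range g) :=
    Convex.sum_mem (convex_convexHull ℝ _) (fun v _ => ENNReal.toReal_nonneg) hweight
      (fun v _ => hqhull v)
  have hQ1 : Q.1 = ∫ x, f1 x ∂ξ := by
    rw [hsplit1, hQ, Prod.fst_sum]
    exact Finset.sum_congr rfl fun v _ => hq1 v
  have hQ2 : ∀ i, Q.2 i ≤ ∫ x, f2 x i ∂ξ := by
    intro i
    rw [hsplit2 i, hQ, Prod.snd_sum, Finset.sum_apply]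
    exact Finset.sum_le_sum fun v _ => hq2 v i
  -- final Carathéodory step in W
  have hrank : Module.finrank ℝ W + 1 = d1 + d2 + 1 := by
    show Module.finrank ℝ (V1 × (Fin d2 → ℝ)) + 1 = d1 + d2 + 1
    rw [Module.finrank_prod, hd1, Module.finrank_fin_fun]
  obtain ⟨u, z, hu0, hu1, hzmem, hzsum⟩ := caratheodory_point hQhull
  choose xf hxf using hzmem
  set s : Finset X := Finset.univ.image xf with hs
  set wght : X → ℝ≥0 := fun x =>
    Real.toNNReal (∑ j ∈ Finset.univ.filter fun j => xf j = x, u j) with hwght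
  have hwghtR : ∀ x ∈ s, (wght x : ℝ) = ∑ j ∈ Finset.univ.filter fun j => xf j = x, u j :=
    fun x _ => Real.coe_toNNReal _ (Finset.sum_nonneg fun j _ => hu0 j)
  have hgroupV : ∀ (F : X → V1),
      ∑ x ∈ s, (wght x : ℝ) • F x = ∑ j, u j • F (xf j) := by
    intro F
    rw [← Finset.sum_fiberwise_of_maps_to (g := xf)
      (fun j _ => Finset.mem_image_of_mem xf (Finset.mem_univ j)) (fun j => u j • F (xf j))]
    refine Finset.sum_congr rfl fun x hx => ?_
    have hterm : ∀ j ∈ Finset.univ.filter fun j => xf j = x,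
        u j • F (xf j) = u j • F x := by
      intro j hj
      rw [(Finset.mem_filter.1 hj).2]
    calc (wght x : ℝ) • F x = (∑ j ∈ Finset.univ.filter fun j => xf j = x, u j) • F x := by
          rw [hwghtR x hx]
      _ = ∑ j ∈ Finset.univ.filter fun j => xf j = x, u j • F x := Finset.sum_smul
      _ = ∑ j ∈ Finset.univ.filter fun j => xf j = x, u j • F (xf j) :=
          (Finset.sum_congr rfl fun j hj => by rw [(Finset.mem_filter.1 hj).2]).symm
  have hgroupR : ∀ (F : X → ℝ),
      ∑ x ∈ s, (wght x : ℝ) • F x = ∑ j, u j • F (xf j) := by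
    intro F
    rw [← Finset.sum_fiberwise_of_maps_to (g := xf)
      (fun j _ => Finset.mem_image_of_mem xf (Finset.mem_univ j)) (fun j => u j • F (xf j))]
    refine Finset.sum_congr rfl fun x hx => ?_
    have hterm : ∀ j ∈ Finset.univ.filter fun j => xf j = x,
        u j • F (xf j) = u j • F x := by
      intro j hj
      rw [(Finset.mem_filter.1 hj).2]
    calc (wght x : ℝ) • F x = (∑ j ∈ Finset.univ.filter fun j => xf j = x, u j) • F x := by
          rw [hwghtR x hx]
      _ = ∑ j ∈ Finset.univ.filter fun j => xf j = x, u j • F x := Finset.sum_smul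
      _ = ∑ j ∈ Finset.univ.filter fun j => xf j = x, u j • F (xf j) :=
          (Finset.sum_congr rfl fun j hj => by rw [(Finset.mem_filter.1 hj).2]).symm
  set η : Measure X := ∑ x ∈ s, (wght x : ENNReal) • Measure.dirac x with hη
  have hηintV : ∀ (f : X → V1), ∫ x, f x ∂η = ∑ x ∈ s, (wght x : ℝ) • f x := by
    intro f
    rw [hη]
    exact integral_wsum_dirac s wght f
  have hηintR : ∀ (f : X → ℝ), ∫ x, f x ∂η = ∑ x ∈ s, (wght x : ℝ) • f x := by
    intro f
    rw [hη]
    exact integral_wsum_dirac s wght f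
  refine ⟨s, wght, η, ?_, ?_, rfl, ?_, ?_⟩
  · constructor
    rw [hη, Measure.finset_sum_apply]
    have : ∀ x ∈ s, ((wght x : ENNReal) • Measure.dirac x) Set.univ
        = ENNReal.ofReal (∑ j ∈ Finset.univ.filter fun j => xf j = x, u j) := by
      intro x hx
      rw [Measure.smul_apply, measure_univ, smul_eq_mul, mul_one]
      rfl
    rw [Finset.sum_congr rfl this,
      ← ENNReal.ofReal_sum_of_nonneg
        (fun x _ => Finset.sum_nonneg fun j _ => hu0 j),
      Finset.sum_fiberwise_of_maps_to
        (fun j _ => Finset.mem_image_of_mem xf (Finset.mem_univ j)) u,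
      hu1, ENNReal.ofReal_one]
  · calc s.card ≤ (Finset.univ : Finset (Fin (Module.finrank ℝ W + 1))).card :=
          Finset.card_image_le
      _ = d1 + d2 + 1 := by rw [Finset.card_univ, Fintype.card_fin, hrank]
  · rw [hηintV f1, hgroupV f1, ← hQ1, ← hzsum, Prod.fst_sum]
    refine Finset.sum_congr rfl fun j _ => ?_
    have : f1 (xf j) = (z j).1 := congrArg Prod.fst (hxf j)
    rw [this]; rfl
  · intro i
    have h1 : ∫ x, f2 x i ∂η = ∑ x ∈ s, (wght x : ℝ) • f2 x i := hηintR fun x => f2 x i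
    have h2 : ∑ x ∈ s, (wght x : ℝ) • f2 x i = ∑ j, u j • f2 (xf j) i :=
      hgroupR fun x => f2 x i
    have h3 : ∑ j, u j • f2 (xf j) i = Q.2 i := by
      rw [← hzsum, Prod.snd_sum, Finset.sum_apply]
      refine Finset.sum_congr rfl fun j _ => ?_
      have : f2 (xf j) = (z j).2 := congrArg Prod.snd (hxf j)
      rw [this]; rfl
    rw [h1, h2, h3]
    exact hQ2 i
end

section
/- In the constrained design setting, suppose ξ* ∈ Ξ_fin(X) ∩ Ξ_feas(X), λ* ∈ Λ = [0,∞)^{I_ineq} × ℝ^{I_eq}, and ε ≥ 0 satisfy the complementarity conditions λ*_i Ψ_i(ξ*) = 0 for all i ∈ I_ineq and the lower bound inf_{x∈X} ψ^L(ξ*,λ*,x) ≥ −ε on the Lagrangian sensitivity function. Then ξ* is an ε-optimal solution: Ψ_0(ξ*) ≤ inf_{ξ ∈ Ξ_feas(X)} Ψ_0(ξ) + ε. -/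
open MeasureTheory

/-- Sufficient ε-optimality condition: if `ξ* ∈ Ξ_fin ∩ Ξ_feas`, `λ* ∈ Λ`
satisfies the complementarity conditions and the Lagrangian sensitivity function satisfies
`ψ^L(ξ*,λ*,x) ≥ −ε` for all `x ∈ X`, then `Ψ₀(ξ*) ≤ inf_{ξ ∈ Ξ_feas} Ψ₀(ξ) + ε`. -/
theorem eps_optimality_of_sensitivity_lower_bound
    {X : Type*} [MetricSpace X] [CompactSpace X] [Nonempty X]
    [MeasurableSpace X] [BorelSpace X]
    {Iineq Ieq : Type*} [Fintype Iineq] [Fintype Ieq]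
    (Ψ0 : ProbabilityMeasure X → WithTop ℝ)
    (Ψineq : Iineq → ProbabilityMeasure X → WithTop ℝ)
    (Ψeq : Ieq → ProbabilityMeasure X → ℝ)
    (ψ0 : ProbabilityMeasure X → X → ℝ)
    (ψineq : Iineq → ProbabilityMeasure X → X → ℝ)
    (ψeq : Ieq → ProbabilityMeasure X → X → ℝ)
    (hint0 : ∀ ξ η : ProbabilityMeasure X, Ψ0 ξ ≠ ⊤ → Integrable (ψ0 ξ) (η : Measure X))
    (hintineq : ∀ i, ∀ ξ η : ProbabilityMeasure X, Ψineq i ξ ≠ ⊤ →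
      Integrable (ψineq i ξ) (η : Measure X))
    (hinteq : ∀ i, ∀ ξ η : ProbabilityMeasure X, Integrable (ψeq i ξ) (η : Measure X))
    (hsub0 : ∀ ξ η : ProbabilityMeasure X, Ψ0 ξ ≠ ⊤ →
      Ψ0 ξ + ((∫ x, ψ0 ξ x ∂(η : Measure X) : ℝ) : WithTop ℝ) ≤ Ψ0 η)
    (hsubineq : ∀ i, ∀ ξ η : ProbabilityMeasure X, Ψineq i ξ ≠ ⊤ →
      Ψineq i ξ + ((∫ x, ψineq i ξ x ∂(η : Measure X) : ℝ) : WithTop ℝ) ≤ Ψineq i η)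
    (hsubeq : ∀ i, ∀ ξ η : ProbabilityMeasure X,
      Ψeq i η - Ψeq i ξ = ∫ x, ψeq i ξ x ∂(η : Measure X))
    (ξs : ProbabilityMeasure X) (lam1 : Iineq → ℝ) (lam2 : Ieq → ℝ) (ε : ℝ) (hε : 0 ≤ ε)
    (hfin0 : Ψ0 ξs ≠ ⊤) (hfinineq : ∀ i, Ψineq i ξs ≠ ⊤)
    (hfeasineq : ∀ i, Ψineq i ξs ≤ 0) (hfeaseq : ∀ i, Ψeq i ξs = 0)
    (hlam : ∀ i, 0 ≤ lam1 i)
    (hcompl : ∀ i, ((lam1 i : ℝ) : WithTop ℝ) * Ψineq i ξs = 0)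
    (hinf : ∀ x : X,
      -ε ≤ ψ0 ξs x + ∑ i, lam1 i * ψineq i ξs x + ∑ i, lam2 i * ψeq i ξs x) :
    ∀ ξ : ProbabilityMeasure X, (∀ i, Ψineq i ξ ≤ 0) → (∀ i, Ψeq i ξ = 0) →
      Ψ0 ξs ≤ Ψ0 ξ + ((ε : ℝ) : WithTop ℝ) := by

  intro ξ hξineq hξeq
  obtain ⟨c0, hc0⟩ := WithTop.ne_top_iff_exists.mp hfin0
  set I0 : ℝ := ∫ x, ψ0 ξs x ∂(ξ : Measure X) with hI0
  -- each equality-constraint integral vanishes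
  have hIe : ∀ i, (∫ x, ψeq i ξs x ∂(ξ : Measure X)) = 0 := by
    intro i
    rw [← hsubeq i ξs ξ, hξeq i, hfeaseq i, sub_zero]
  -- each weighted inequality-constraint integral is ≤ 0
  have hIi : ∀ i, lam1 i * (∫ x, ψineq i ξs x ∂(ξ : Measure X)) ≤ 0 := by
    intro i
    obtain ⟨a, ha⟩ := WithTop.ne_top_iff_exists.mp (hfinineq i)
    have h1 := hsubineq i ξs ξ (hfinineq i)
    rw [← ha] at h1
    have h2 := (hξineq i)
    have h3 : ((a + ∫ x, ψineq i ξs x ∂(ξ : Measure X) : ℝ) : WithTop ℝ) ≤ ((0:ℝ) : WithTop ℝ) := by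
      push_cast
      exact le_trans h1 (by exact_mod_cast h2)
    have h4 : a + (∫ x, ψineq i ξs x ∂(ξ : Measure X)) ≤ 0 := by exact_mod_cast h3
    have h5 : lam1 i * a = 0 := by
      have := hcompl i
      rw [← ha] at this
      exact_mod_cast this
    nlinarith [hlam i, mul_le_mul_of_nonneg_left h4 (hlam i)]
  -- integrate the pointwise bound
  have hintS : Integrable (fun x => ψ0 ξs x + ∑ i, lam1 i * ψineq i ξs x
      + ∑ i, lam2 i * ψeq i ξs x) (ξ : Measure X) := by
    apply Integrable.add
    apply Integrable.add
    · exact hint0 ξs ξ hfin0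
    · exact integrable_finset_sum _ (fun i _ => (hintineq i ξs ξ (hfinineq i)).const_mul _)
    · exact integrable_finset_sum _ (fun i _ => (hinteq i ξs ξ).const_mul _)
  have hmono : -ε ≤ ∫ x, (ψ0 ξs x + ∑ i, lam1 i * ψineq i ξs x
      + ∑ i, lam2 i * ψeq i ξs x) ∂(ξ : Measure X) := by
    have := integral_mono (integrable_const (-ε)) hintS (fun x => hinf x)
    simpa using this
  have hsplit : (∫ x, (ψ0 ξs x + ∑ i, lam1 i * ψineq i ξs x
      + ∑ i, lam2 i * ψeq i ξs x) ∂(ξ : Measure X))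
      = I0 + ∑ i, lam1 i * (∫ x, ψineq i ξs x ∂(ξ : Measure X))
        + ∑ i, lam2 i * (∫ x, ψeq i ξs x ∂(ξ : Measure X)) := by
    have h1 : Integrable (fun x => ∑ i, lam1 i * ψineq i ξs x) (ξ : Measure X) :=
      integrable_finset_sum _ (fun i _ => (hintineq i ξs ξ (hfinineq i)).const_mul _)
    have h2 : Integrable (fun x => ∑ i, lam2 i * ψeq i ξs x) (ξ : Measure X) :=
      integrable_finset_sum _ (fun i _ => (hinteq i ξs ξ).const_mul _)
    have hA : Integrable (fun x => ψ0 ξs x + ∑ i, lam1 i * ψineq i ξs x) (ξ : Measure X) :=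
      (hint0 ξs ξ hfin0).add h1
    rw [integral_add hA h2, integral_add (hint0 ξs ξ hfin0) h1,
      integral_finset_sum _ (fun i _ => (hintineq i ξs ξ (hfinineq i)).const_mul _),
      integral_finset_sum _ (fun i _ => (hinteq i ξs ξ).const_mul _)]
    simp [integral_const_mul, hI0]
  have hI0ge : -ε ≤ I0 := by
    rw [hsplit] at hmono
    have hs1 : ∑ i, lam1 i * (∫ x, ψineq i ξs x ∂(ξ : Measure X)) ≤ 0 :=
      Finset.sum_nonpos (fun i _ => hIi i)
    have hs2 : ∑ i, lam2 i * (∫ x, ψeq i ξs x ∂(ξ : Measure X)) = 0 := by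
      simp [hIe]
    linarith
  -- conclude
  have hmain := hsub0 ξs ξ hfin0
  rw [← hc0] at hmain ⊢
  calc ((c0 : ℝ) : WithTop ℝ) = ((c0 - ε + ε : ℝ) : WithTop ℝ) := by norm_num
    _ = ((c0 - ε : ℝ) : WithTop ℝ) + ((ε : ℝ) : WithTop ℝ) := by push_cast; ring_nf
    _ ≤ ((c0 + I0 : ℝ) : WithTop ℝ) + ((ε : ℝ) : WithTop ℝ) := by
        gcongr
        exact_mod_cast (by linarith : c0 - ε ≤ c0 + I0)
    _ ≤ Ψ0 ξ + ((ε : ℝ) : WithTop ℝ) := by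
        gcongr
        push_cast
        exact hmain
end

section
/- Let X be a compact metric space, Ψ : P(X) → ℝ ∪ {∞} convex with sensitivity function ψ : dom Ψ × X → ℝ (so that directional derivatives are ∫ ψ(ξ,x) dη(x) and the subgradient inequality Ψ(η) − Ψ(ξ) ≥ ∫ ψ(ξ,x) dη(x) holds). If ψ is jointly continuous on dom Ψ × X (with the weak topology on the first factor), then the restriction Ψ|_{dom Ψ} is continuous: for any sequence ξ^n → ξ weakly with ξ^n, ξ ∈ dom Ψ, one has Ψ(ξ^n) → Ψ(ξ). -/
open MeasureTheory Filter
open scoped Topology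

/-- If a convex functional `Ψ` on probability measures has a sensitivity function
`ψ` (subgradient inequality plus the normalization `∫ ψ(ξ,·) dξ = 0`) that is jointly
continuous on `dom Ψ × X`, then `Ψ` restricted to its domain is (sequentially) continuous
for the weak topology. -/
theorem continuity_of_functional_with_continuous_sensitivity
    {X : Type*} [MetricSpace X] [CompactSpace X] [MeasurableSpace X] [BorelSpace X]
    (Ψ : ProbabilityMeasure X → WithTop ℝ) (ψ : ProbabilityMeasure X → X → ℝ)
    (hsub : ∀ ξ η : ProbabilityMeasure X, Ψ ξ ≠ ⊤ →
      Ψ ξ + ((∫ x, ψ ξ x ∂(η : Measure X) : ℝ) : WithTop ℝ) ≤ Ψ η)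
    (hnorm : ∀ ξ : ProbabilityMeasure X, Ψ ξ ≠ ⊤ → ∫ x, ψ ξ x ∂(ξ : Measure X) = 0)
    (hψ : ContinuousOn (fun p : ProbabilityMeasure X × X => ψ p.1 p.2)
      ({ξ | Ψ ξ ≠ ⊤} ×ˢ Set.univ)) :
    ∀ (ξn : ℕ → ProbabilityMeasure X) (ξ : ProbabilityMeasure X),
      (∀ n, Ψ (ξn n) ≠ ⊤) → Ψ ξ ≠ ⊤ → Tendsto ξn atTop (𝓝 ξ) →
      Tendsto (fun n => (Ψ (ξn n)).untopD 0) atTop (𝓝 ((Ψ ξ).untopD 0)) := by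
  intro ξn ξ hξn hξ hconv
  -- real values
  set a : ℝ := (Ψ ξ).untopD 0 with ha
  set an : ℕ → ℝ := fun n => (Ψ (ξn n)).untopD 0 with han
  have hΨξ : Ψ ξ = (a : WithTop ℝ) := by
    lift Ψ ξ to ℝ using hξ with r hr
    simp [ha, ← hr]
  have hΨξn : ∀ n, Ψ (ξn n) = ((an n : ℝ) : WithTop ℝ) := by
    intro n
    lift Ψ (ξn n) to ℝ using hξn n with r hr
    show ((r : WithTop ℝ)) = (((Ψ (ξn n)).untopD 0 : ℝ) : WithTop ℝ)
    rw [← hr, WithTop.untopD_coe]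
  -- continuity of slices: for ζ in domain, ψ ζ · is continuous
  have hslice : ∀ ζ : ProbabilityMeasure X, Ψ ζ ≠ ⊤ → Continuous (ψ ζ) := by
    intro ζ hζ
    rw [← continuousOn_univ]
    have hmap : Set.MapsTo (fun x : X => ((ζ, x) : ProbabilityMeasure X × X))
        Set.univ ({ξ | Ψ ξ ≠ ⊤} ×ˢ Set.univ) := by
      intro x _; exact ⟨hζ, trivial⟩
    exact hψ.comp ((continuous_const.prodMk continuous_id).continuousOn) hmap
  -- first limit: ∫ ψ ξ dξn → ∫ ψ ξ dξ = 0
  have hint1 : Tendsto (fun n => ∫ x, ψ ξ x ∂(ξn n : Measure X)) atTop (𝓝 0) := by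
    have hc : Continuous (ψ ξ) := hslice ξ hξ
    have := MeasureTheory.ProbabilityMeasure.tendsto_iff_forall_integral_tendsto.mp hconv
      (BoundedContinuousFunction.mkOfCompact ⟨ψ ξ, hc⟩)
    simpa [hnorm ξ hξ] using this
  -- second limit: ∫ ψ (ξn n) dξ → 0
  have hK : IsCompact (insert ξ (Set.range ξn)) := hconv.isCompact_insert_range
  have hKX : IsCompact ((insert ξ (Set.range ξn)) ×ˢ (Set.univ : Set X)) :=
    hK.prod isCompact_univ
  have hKsub : (insert ξ (Set.range ξn)) ×ˢ (Set.univ : Set X) ⊆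
      ({ξ | Ψ ξ ≠ ⊤} ×ˢ Set.univ) := by
    rintro ⟨ζ, x⟩ ⟨hζ, -⟩
    refine ⟨?_, trivial⟩
    rcases hζ with rfl | ⟨n, rfl⟩
    · exact hξ
    · exact hξn n
  obtain ⟨C, hC⟩ := hKX.exists_bound_of_continuousOn (hψ.mono hKsub)
  have hint2 : Tendsto (fun n => ∫ x, ψ (ξn n) x ∂(ξ : Measure X)) atTop (𝓝 0) := by
    have h0 : (0 : ℝ) = ∫ x, ψ ξ x ∂(ξ : Measure X) := (hnorm ξ hξ).symm
    rw [h0]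
    refine tendsto_integral_of_dominated_convergence (fun _ => C) ?_ ?_ ?_ ?_
    · intro n
      exact ((hslice (ξn n) (hξn n)).aestronglyMeasurable)
    · exact integrable_const C
    · intro n
      refine Filter.Eventually.of_forall fun x => ?_
      exact hC (ξn n, x) ⟨Or.inr ⟨n, rfl⟩, trivial⟩
    · refine Filter.Eventually.of_forall fun x => ?_
      have hx : Tendsto (fun n => ((ξn n, x) : ProbabilityMeasure X × X)) atTop
          (𝓝[({ξ | Ψ ξ ≠ ⊤} ×ˢ Set.univ)] ((ξ, x) : ProbabilityMeasure X × X)) := by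
        refine tendsto_nhdsWithin_iff.mpr ⟨?_, ?_⟩
        · exact (hconv.prodMk_nhds tendsto_const_nhds)
        · exact Filter.Eventually.of_forall fun n => ⟨hξn n, trivial⟩
      exact ((hψ (ξ, x) ⟨hξ, trivial⟩).tendsto.comp hx)
  -- squeeze
  have hlow : ∀ n, a + ∫ x, ψ ξ x ∂(ξn n : Measure X) ≤ an n := by
    intro n
    have := hsub ξ (ξn n) hξ
    rw [hΨξ, hΨξn n, ← WithTop.coe_add, WithTop.coe_le_coe] at this
    exact this
  have hup : ∀ n, an n ≤ a - ∫ x, ψ (ξn n) x ∂(ξ : Measure X) := by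
    intro n
    have := hsub (ξn n) ξ (hξn n)
    rw [hΨξ, hΨξn n, ← WithTop.coe_add, WithTop.coe_le_coe] at this
    linarith
  have hl : Tendsto (fun n => a + ∫ x, ψ ξ x ∂(ξn n : Measure X)) atTop (𝓝 a) := by
    simpa using tendsto_const_nhds.add hint1
  have hu : Tendsto (fun n => a - ∫ x, ψ (ξn n) x ∂(ξ : Measure X)) atTop (𝓝 a) := by
    simpa using tendsto_const_nhds.sub hint2
  exact tendsto_of_tendsto_of_tendsto_of_le_of_le hl hu hlow hup
end
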